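/- Let (I, ≤) be a directed poset, let G = lim G_i be the inverse limit of an inverse system {G_i, φ_ij, I} of pro-p groups, and let H_i ≤ G_i be closed subgroups with φ_ij(H_i) ≤ H_j whenever j ≤ i. Suppose there is a constant d such that d(G_i) = d for all i ∈ I. Then for the induced closed subgroup H = lim H_i of G one has H^G = lim H_i^{G_i}, i.e. the smallest closed normal subgroup of G containing H equals the inverse limit of the smallest closed normal subgroups of the G_i containing the H_i. -/

import Mathlib

/-!
Basic notions for pro-`p` groups.  Throughout, a pro-`p` group is a compact,
Hausdorff, totally disconnected topological group (these assumptions are carried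
as typeclass hypotheses) satisfying the predicate `IsProP`: every open normal
subgroup has index a power of `p`.
-/

universe u v

/-- Every open normal subgroup has index a power of `p`. -/
def IsProP (p : ℕ) (G : Type u) [Group G] [TopologicalSpace G] : Prop :=
  ∀ N : Subgroup G, N.Normal → IsOpen (N : Set G) → ∃ n : ℕ, N.index = p ^ n

/-- The set `X` topologically generates `G`. -/
def TopGenerates (G : Type u) [Group G] [TopologicalSpace G] (X : Set G) : Prop :=
  closure ((Subgroup.closure X : Subgroup G) : Set G) = Set.univ

/-- `d(G)`: the minimal cardinality of a topological generating set of `G`, in `ℕ∞`. -/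
noncomputable def dRank (G : Type u) [Group G] [TopologicalSpace G] : ℕ∞ :=
  ⨅ X : {X : Set G // TopGenerates G X}, (X.1).encard

/-- A subgroup is procyclic if it is topologically generated by one of its elements. -/
def Subgroup.IsProcyclic {G : Type u} [Group G] [TopologicalSpace G] (C : Subgroup G) : Prop :=
  ∃ c ∈ C, (C : Set G) ⊆ closure ((Subgroup.closure {c} : Subgroup G) : Set G)

/-- The smallest closed normal subgroup containing a subset `S`. -/
def closedNormalClosure {G : Type u} [Group G] [TopologicalSpace G] (S : Set G) : Subgroup G :=
  sInf {N : Subgroup G | S ⊆ ↑N ∧ N.Normal ∧ IsClosed (N : Set G)}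

/-- The Frattini subgroup of a topological group: the intersection of all
maximal open (proper) subgroups. -/
def proPFrattini (G : Type u) [Group G] [TopologicalSpace G] : Subgroup G :=
  sInf {M : Subgroup G | IsOpen (M : Set G) ∧ IsCoatom M}

/-- A closed subgroup is (topologically) finitely generated. -/
def Subgroup.TopFG {G : Type u} [Group G] [TopologicalSpace G] (H : Subgroup G) : Prop :=
  ∃ S : Set G, S.Finite ∧ S ⊆ ↑H ∧
    (H : Set G) ⊆ closure ((Subgroup.closure S : Subgroup G) : Set G)

/-!  Inverse systems of (pro-`p`) groups over a directed poset and their inverse limits. -/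

/-- The inverse limit of an inverse system of groups, as a subgroup of the product. -/
def invLim {I : Type u} [Preorder I] (G : I → Type v) [∀ i, Group (G i)]
    (φ : ∀ i j : I, j ≤ i → (G i →* G j)) : Subgroup (∀ i, G i) where
  carrier := {x | ∀ (i j : I) (h : j ≤ i), φ i j h (x i) = x j}
  one_mem' := by intro i j h; simp
  mul_mem' := by intro a b ha hb i j h; simp [ha i j h, hb i j h]
  inv_mem' := by intro a ha i j h; simp [ha i j h]

/-- The projection from the inverse limit to the `i`-th group of the system. -/
def invLimProj {I : Type u} [Preorder I] (G : I → Type v) [∀ i, Group (G i)]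
    (φ : ∀ i j : I, j ≤ i → (G i →* G j)) (i : I) : ↥(invLim G φ) →* G i :=
  (Pi.evalMonoidHom G i).comp (invLim G φ).subtype

/-!
Write `K` for the closed normal closure of `lim Hᵢ` in `G = lim Gᵢ`; the inclusion
`K ≤ lim Hᵢ^{Gᵢ}` is formal. Conversely, as `K` is closed, it suffices that every coordinate `x_k`
of an element `x` of the right-hand side lies in the compact subgroup `π_k(K)`, hence, `G_k` being
profinite, in the open subgroup `L = π_k(K) W` for every open normal `W ◁ G_k`.
By compactness `π_k(lim Hᵢ) = ⋂ⱼ φ_jk(H_j)` and `π_k(G) = ⋂ⱼ φ_jk(G_j)`, so for some `j ≥ k` the map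
`φ_jk` sends `H_j` into `L` and `G_j` into the open normalizer of `L`, which contains `π_k(G)`.
Then `φ_jk⁻¹(L)` is a closed normal subgroup of `G_j` containing `H_j`, hence `x_j`, and
`x_k = φ_jk(x_j) ∈ L`.
-/

section ClosedNormalClosure

variable {Γ : Type*} [Group Γ] [TopologicalSpace Γ]

theorem isClosed_closedNormalClosure (S : Set Γ) :
    IsClosed (closedNormalClosure S : Set Γ) := by
  rw [closedNormalClosure, Subgroup.coe_sInf]
  exact isClosed_biInter fun N hN => hN.2.2

theorem closedNormalClosure_normal (S : Set Γ) : (closedNormalClosure S).Normal :=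
  ⟨fun n hn g => Subgroup.mem_sInf.mpr fun N hN =>
    hN.2.1.conj_mem n (Subgroup.mem_sInf.mp hn N hN) g⟩

theorem subset_closedNormalClosure (S : Set Γ) : S ⊆ closedNormalClosure S :=
  fun _ hs => Subgroup.mem_sInf.mpr fun _ hN => hN.1 hs

theorem closedNormalClosure_le {S : Set Γ} {N : Subgroup Γ} (hN : N.Normal)
    (hNc : IsClosed (N : Set Γ)) (hSN : S ⊆ N) : closedNormalClosure S ≤ N :=
  sInf_le ⟨hSN, hN, hNc⟩

end ClosedNormalClosure

theorem Subgroup.normal_comap_of_range_le_normalizer {Γ Δ : Type*} [Group Γ] [Group Δ]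
    {f : Γ →* Δ} {L : Subgroup Δ} (hf : f.range ≤ normalizer (L : Set Δ)) : (L.comap f).Normal :=
  ⟨fun n hn g => by
    simpa only [mem_comap, map_mul, map_inv] using (mem_normalizer_iff.mp (hf ⟨g, rfl⟩) _).mp hn⟩

theorem MonoidHom.range_le_normalizer_map_sup {Γ Δ : Type*} [Group Γ] [Group Δ] (f : Γ →* Δ)
    {K : Subgroup Γ} (hK : K.Normal) {W : Subgroup Δ} (hW : W.Normal) :
    f.range ≤ Subgroup.normalizer ((K.map f ⊔ W : Subgroup Δ) : Set Δ) := by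
  rw [MonoidHom.range_eq_map, ← Subgroup.normalizer_eq_top_iff.mpr hK]
  exact fun b hb => Subgroup.normalizer_inf_normalizer_le_normalizer_sup _ _
    ⟨Subgroup.le_normalizer_map f hb, Subgroup.normalizer_eq_top_iff.mpr hW ▸ trivial⟩

theorem ProfiniteGrp.mem_of_forall_mem_sup_openNormalSubgroup {Γ : Type*} [Group Γ]
    [TopologicalSpace Γ] [IsTopologicalGroup Γ] [CompactSpace Γ] [TotallyDisconnectedSpace Γ]
    {S : Subgroup Γ} (hS : IsClosed (S : Set Γ)) {x : Γ}
    (hx : ∀ W : OpenNormalSubgroup Γ, x ∈ S ⊔ W.toSubgroup) : x ∈ S := by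
  rw [show S = (⟨S, hS⟩ : ClosedSubgroup Γ).toSubgroup from rfl, closedSubgroup_eq_sInf_open]
  refine Subgroup.mem_sInf.mpr fun N ⟨hN_open, hSN⟩ => ?_
  obtain ⟨W, hWN⟩ := exist_openNormalSubgroup_sub_open_nhds_of_one hN_open N.one_mem
  exact sup_le hSN hWN (hx W)

section InverseLimit

variable {I : Type u} [Preorder I] {G : I → Type v} [∀ i, Group (G i)]
  {φ : ∀ i j : I, j ≤ i → (G i →* G j)}

@[simp]
theorem invLimProj_apply (i : I) (x : invLim G φ) : invLimProj G φ i x = (x : ∀ i, G i) i :=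
  rfl

theorem map_le_map_of_le (H : ∀ i, Subgroup (G i))
    (hcomp : ∀ (i j k : I) (hij : j ≤ i) (hjk : k ≤ j),
      (φ j k hjk).comp (φ i j hij) = φ i k (hjk.trans hij))
    (hHmap : ∀ (i j : I) (h : j ≤ i), (H i).map (φ i j h) ≤ H j)
    {k j m : I} (hkj : k ≤ j) (hjm : j ≤ m) :
    (H m).map (φ m k (hkj.trans hjm)) ≤ (H j).map (φ j k hkj) := by
  rw [← hcomp m j k hjm hkj, ← Subgroup.map_map]
  exact Subgroup.map_mono (hHmap m j hjm)

variable [∀ i, TopologicalSpace (G i)]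

theorem continuous_invLimProj (i : I) : Continuous (invLimProj G φ i) :=
  (continuous_apply i).comp continuous_subtype_val

theorem isClosed_invLim [∀ i, T2Space (G i)]
    (hcont : ∀ (i j : I) (h : j ≤ i), Continuous (φ i j h)) :
    IsClosed (invLim G φ : Set (∀ i, G i)) := by
  have : (invLim G φ : Set (∀ i, G i)) = ⋂ (i) (j) (h : j ≤ i), {x | φ i j h (x i) = x j} := by
    ext; simp only [Set.mem_iInter]; rfl
  rw [this]
  exact isClosed_iInter fun i => isClosed_iInter fun j => isClosed_iInter fun h =>
    isClosed_eq ((hcont i j h).comp (continuous_apply i)) (continuous_apply j)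

theorem compactSpace_invLim [∀ i, CompactSpace (G i)] [∀ i, T2Space (G i)]
    (hcont : ∀ (i j : I) (h : j ≤ i), Continuous (φ i j h)) : CompactSpace (invLim G φ) :=
  isCompact_iff_compactSpace.mp (isClosed_invLim hcont).isCompact

theorem mem_closure_of_forall_invLimProj_mem_image [IsDirectedOrder I] [Nonempty I]
    {S : Set (invLim G φ)} {x : invLim G φ}
    (hx : ∀ k, invLimProj G φ k x ∈ invLimProj G φ k '' S) : x ∈ closure S := by
  refine mem_closure_iff.mpr fun O hO hxO => ?_
  obtain ⟨O', hO', rfl⟩ := isOpen_induced_iff.mp hO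
  obtain ⟨F, V, hFV, hFVO⟩ := isOpen_pi_iff.mp hO' _ hxO
  obtain ⟨k, hk⟩ := F.exists_le
  obtain ⟨y, hyS, hyx⟩ := hx k
  refine ⟨y, hFVO fun i hi => ?_, hyS⟩
  have hyxi : (y : ∀ i, G i) i = (x : ∀ i, G i) i := by
    rw [← y.2 k i (hk i hi), ← x.2 k i (hk i hi)]
    exact congrArg _ hyx
  exact hyxi ▸ (hFV i hi).2

theorem mem_map_invLimProj_of_forall_mem_map [IsDirectedOrder I] [∀ i, CompactSpace (G i)]
    [∀ i, T2Space (G i)] (hcont : ∀ (i j : I) (h : j ≤ i), Continuous (φ i j h))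
    (hcomp : ∀ (i j k : I) (hij : j ≤ i) (hjk : k ≤ j),
      (φ j k hjk).comp (φ i j hij) = φ i k (hjk.trans hij))
    (H : ∀ i, Subgroup (G i)) (hHclosed : ∀ i, IsClosed (H i : Set (G i)))
    (hHmap : ∀ (i j : I) (h : j ≤ i), (H i).map (φ i j h) ≤ H j)
    {k : I} {b : G k} (hb : ∀ j (h : k ≤ j), b ∈ (H j).map (φ j k h)) :
    b ∈ (⨅ i, (H i).comap (invLimProj G φ i)).map (invLimProj G φ k) := by
  classical
  have compatible_of_le {y : ∀ i, G i} {m : I} (hy : ∀ l (h : l ≤ m), φ m l h (y m) = y l)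
      {i l : I} (hli : l ≤ i) (him : i ≤ m) : φ i l hli (y i) = y l := by
    rw [← hy i him, ← MonoidHom.comp_apply, hcomp m i l him hli, hy l]
  let C : {j // k ≤ j} → Set (∀ i, G i) := fun j =>
    (Set.univ.pi fun i => (H i : Set (G i))) ∩ {y | y k = b} ∩
      ⋂ (l) (h : l ≤ j.1), {y | φ j.1 l h (y j.1) = y l}
  have hC_closed (j) : IsClosed (C j) :=
    ((isClosed_set_pi fun i _ => hHclosed i).inter (isClosed_eq (continuous_apply k)
      continuous_const)).inter (isClosed_iInter fun l => isClosed_iInter fun h =>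
        isClosed_eq ((hcont j.1 l h).comp (continuous_apply _)) (continuous_apply l))
  have hC_nonempty (j) : (C j).Nonempty := by
    obtain ⟨h₀, hh₀, rfl⟩ := hb j.1 j.2
    refine ⟨fun l => if h : l ≤ j.1 then φ j.1 l h h₀ else 1, ⟨fun i _ => ?_, dif_pos j.2⟩, ?_⟩
    · dsimp only
      split_ifs with h
      exacts [hHmap j.1 i h ⟨h₀, hh₀, rfl⟩, one_mem _]
    · simp only [Set.mem_iInter, Set.mem_ofPred_eq]
      intro l h
      rw [dif_pos le_rfl, dif_pos h, ← MonoidHom.comp_apply, hcomp]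
  have hC_directed : Directed (· ⊇ ·) C := by
    intro j₁ j₂
    obtain ⟨m, h₁, h₂⟩ := exists_ge_ge j₁.1 j₂.1
    have hC_anti (j : {j // k ≤ j}) (hjm : j.1 ≤ m) : C ⟨m, j.2.trans hjm⟩ ⊆ C j := by
      intro y hy
      simp only [C, Set.mem_inter_iff, Set.mem_iInter, Set.mem_ofPred_eq] at hy ⊢
      exact ⟨hy.1, fun l hl => compatible_of_le hy.2 hl hjm⟩
    exact ⟨⟨m, j₁.2.trans h₁⟩, hC_anti j₁ h₁, hC_anti j₂ h₂⟩
  have : Nonempty {j // k ≤ j} := ⟨⟨k, le_rfl⟩⟩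
  obtain ⟨y, hy⟩ := IsCompact.nonempty_iInter_of_directed_nonempty_isCompact_isClosed C
    hC_directed hC_nonempty (fun j => (hC_closed j).isCompact) hC_closed
  simp only [C, Set.mem_iInter, Set.mem_inter_iff, Set.mem_univ_pi, Set.mem_ofPred_eq] at hy
  have hy_lim : y ∈ invLim G φ := fun i l hli => by
    obtain ⟨m, him, hkm⟩ := exists_ge_ge i k
    exact compatible_of_le (hy ⟨m, hkm⟩).2 hli him
  exact ⟨⟨y, hy_lim⟩, Subgroup.mem_iInf.mpr fun i => (hy ⟨k, le_rfl⟩).1.1 i,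
    (hy ⟨k, le_rfl⟩).1.2⟩

theorem exists_forall_map_subset_of_map_invLimProj_subset [IsDirectedOrder I]
    [∀ i, CompactSpace (G i)] [∀ i, T2Space (G i)]
    (hcont : ∀ (i j : I) (h : j ≤ i), Continuous (φ i j h))
    (hcomp : ∀ (i j k : I) (hij : j ≤ i) (hjk : k ≤ j),
      (φ j k hjk).comp (φ i j hij) = φ i k (hjk.trans hij))
    (H : ∀ i, Subgroup (G i)) (hHclosed : ∀ i, IsClosed (H i : Set (G i)))
    (hHmap : ∀ (i j : I) (h : j ≤ i), (H i).map (φ i j h) ≤ H j)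
    {k : I} {U : Set (G k)} (hU : IsOpen U)
    (hHU : ((⨅ i, (H i).comap (invLimProj G φ i)).map (invLimProj G φ k) : Set (G k)) ⊆ U) :
    ∃ j₀, k ≤ j₀ ∧ ∀ j (h : k ≤ j), j₀ ≤ j → ((H j).map (φ j k h) : Set (G k)) ⊆ U := by
  have : Nonempty {j // k ≤ j} := ⟨⟨k, le_rfl⟩⟩
  obtain ⟨j₀, hj₀⟩ := exists_subset_nhds_of_isCompact
    (V := fun j : {j // k ≤ j} => ((H j.1).map (φ j.1 k j.2) : Set (G k)))
    (fun j₁ j₂ => by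
      obtain ⟨m, h₁, h₂⟩ := exists_ge_ge j₁.1 j₂.1
      exact ⟨⟨m, j₁.2.trans h₁⟩, map_le_map_of_le H hcomp hHmap j₁.2 h₁,
        map_le_map_of_le H hcomp hHmap j₂.2 h₂⟩)
    (fun j => (hHclosed j.1).isCompact.image (hcont j.1 k j.2))
    (fun b hb => hU.mem_nhds <| hHU <| mem_map_invLimProj_of_forall_mem_map hcont hcomp H
      hHclosed hHmap fun j h => Set.mem_iInter.mp hb ⟨j, h⟩)
  exact ⟨j₀.1, j₀.2, fun j _ hj _ hb => hj₀ (map_le_map_of_le H hcomp hHmap j₀.2 hj hb)⟩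

theorem invLimProj_mem_map_sup_of_forall_mem_closedNormalClosure [IsDirectedOrder I]
    [∀ i, IsTopologicalGroup (G i)] [∀ i, CompactSpace (G i)] [∀ i, T2Space (G i)]
    (hcont : ∀ (i j : I) (h : j ≤ i), Continuous (φ i j h))
    (hcomp : ∀ (i j k : I) (hij : j ≤ i) (hjk : k ≤ j),
      (φ j k hjk).comp (φ i j hij) = φ i k (hjk.trans hij))
    (H : ∀ i, Subgroup (G i)) (hHclosed : ∀ i, IsClosed (H i : Set (G i)))
    (hHmap : ∀ (i j : I) (h : j ≤ i), (H i).map (φ i j h) ≤ H j)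
    {K : Subgroup (invLim G φ)} (hK : K.Normal) (hHK : ⨅ i, (H i).comap (invLimProj G φ i) ≤ K)
    {x : invLim G φ} (hx : ∀ j, invLimProj G φ j x ∈ closedNormalClosure (H j : Set (G j)))
    {k : I} (W : OpenNormalSubgroup (G k)) :
    invLimProj G φ k x ∈ K.map (invLimProj G φ k) ⊔ W.toSubgroup := by
  set L := K.map (invLimProj G φ k) ⊔ W.toSubgroup
  have hL_open : IsOpen (L : Set (G k)) := Subgroup.isOpen_mono le_sup_right W.isOpen
  have hNL_open : IsOpen (Subgroup.normalizer (L : Set (G k)) : Set (G k)) :=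
    Subgroup.isOpen_mono (le_sup_right.trans L.le_normalizer) W.isOpen
  have hHL : ((⨅ i, (H i).comap (invLimProj G φ i)).map (invLimProj G φ k) : Set (G k)) ⊆ L :=
    fun _ hb => Subgroup.mem_sup_left (Subgroup.map_mono hHK hb)
  have hGL : ((⨅ i, (⊤ : Subgroup (G i)).comap (invLimProj G φ i)).map (invLimProj G φ k) :
      Set (G k)) ⊆ Subgroup.normalizer (L : Set (G k)) := by
    simpa only [Subgroup.comap_top, iInf_top, ← MonoidHom.range_eq_map] using
      SetLike.coe_subset_coe.mpr ((invLimProj G φ k).range_le_normalizer_map_sup hK W.isNormal')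
  obtain ⟨j₁, hkj₁, hj₁⟩ := exists_forall_map_subset_of_map_invLimProj_subset hcont hcomp H
    hHclosed hHmap hL_open hHL
  obtain ⟨j₂, -, hj₂⟩ := exists_forall_map_subset_of_map_invLimProj_subset hcont hcomp
    (fun _ => ⊤) (fun _ => by simp) (fun _ _ _ => le_top) hNL_open hGL
  obtain ⟨j, h₁, h₂⟩ := exists_ge_ge j₁ j₂
  have hkj : k ≤ j := hkj₁.trans h₁
  have hL_comap_normal : (L.comap (φ j k hkj)).Normal :=
    Subgroup.normal_comap_of_range_le_normalizer <| by
      rw [MonoidHom.range_eq_map]; exact hj₂ j hkj h₂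
  have hx_j := closedNormalClosure_le hL_comap_normal
    ((L.isClosed_of_isOpen hL_open).preimage (hcont j k hkj))
    (fun h hh => hj₁ j hkj h₁ ⟨h, hh, rfl⟩) (hx j)
  rwa [Subgroup.mem_comap, invLimProj_apply, x.2 j k hkj] at hx_j

end InverseLimit

theorem closedNormalClosure_invLim_general
    {I : Type u} [Preorder I] [IsDirected I (· ≤ ·)] [Nonempty I]
    (G : I → Type v) [∀ i, Group (G i)] [∀ i, TopologicalSpace (G i)]
    [∀ i, IsTopologicalGroup (G i)] [∀ i, CompactSpace (G i)] [∀ i, T2Space (G i)]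
    [∀ i, TotallyDisconnectedSpace (G i)]
    (φ : ∀ i j : I, j ≤ i → (G i →* G j))
    (hcont : ∀ (i j : I) (h : j ≤ i), Continuous (φ i j h))
    (hcomp : ∀ (i j k : I) (hij : j ≤ i) (hjk : k ≤ j),
      (φ j k hjk).comp (φ i j hij) = φ i k (hjk.trans hij))
    (H : ∀ i, Subgroup (G i))
    (hHclosed : ∀ i, IsClosed ((H i : Set (G i))))
    (hHmap : ∀ (i j : I) (h : j ≤ i), (H i).map (φ i j h) ≤ H j) :
    closedNormalClosure
        ((⨅ i, (H i).comap (invLimProj G φ i) : Subgroup ↥(invLim G φ)) : Set ↥(invLim G φ))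
      = ⨅ i, (closedNormalClosure ((H i : Set (G i)))).comap (invLimProj G φ i) := by
  have := compactSpace_invLim hcont
  set K := closedNormalClosure ((⨅ i, (H i).comap (invLimProj G φ i) :
    Subgroup ↥(invLim G φ)) : Set ↥(invLim G φ))
  have hK_closed : IsClosed (K : Set ↥(invLim G φ)) := isClosed_closedNormalClosure _
  refine le_antisymm (closedNormalClosure_le ?_ ?_ ?_) fun x hx => ?_
  · exact Subgroup.normal_iInf_normal fun i => (closedNormalClosure_normal _).comap _
  · rw [Subgroup.coe_iInf]
    exact isClosed_iInter fun i =>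
      (isClosed_closedNormalClosure _).preimage (continuous_invLimProj i)
  · exact fun y hy => Subgroup.mem_iInf.mpr fun i =>
      subset_closedNormalClosure _ (Subgroup.mem_iInf.mp hy i)
  refine hK_closed.closure_subset (mem_closure_of_forall_invLimProj_mem_image fun k => ?_)
  have hKk_closed : IsClosed (K.map (invLimProj G φ k) : Set (G k)) :=
    (hK_closed.isCompact.image (continuous_invLimProj k)).isClosed
  exact ProfiniteGrp.mem_of_forall_mem_sup_openNormalSubgroup hKk_closed fun W =>
    invLimProj_mem_map_sup_of_forall_mem_closedNormalClosure hcont hcomp H hHclosed hHmap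
      (closedNormalClosure_normal _) (fun y hy => subset_closedNormalClosure _ hy)
      (Subgroup.mem_iInf.mp hx) W

/-- **Lemma 2.1(b).** Let `G = lim Gᵢ` be the inverse limit of an inverse system of
pro-`p` groups with `d(Gᵢ) = d` constant, and let `Hᵢ ≤ Gᵢ` be closed subgroups with
`φᵢⱼ(Hᵢ) ≤ Hⱼ`.  Then for the induced closed subgroup `H = lim Hᵢ` of `G`, the
smallest closed normal subgroup of `G` containing `H` equals `lim Hᵢ^{Gᵢ}`, the
inverse limit of the smallest closed normal subgroups of the `Gᵢ` containing the `Hᵢ`. -/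
theorem closedNormalClosure_invLim
    {p : ℕ} [Fact p.Prime]
    {I : Type u} [Preorder I] [IsDirected I (· ≤ ·)] [Nonempty I]
    (G : I → Type v) [∀ i, Group (G i)] [∀ i, TopologicalSpace (G i)]
    [∀ i, IsTopologicalGroup (G i)] [∀ i, CompactSpace (G i)] [∀ i, T2Space (G i)]
    [∀ i, TotallyDisconnectedSpace (G i)]
    (hpro : ∀ i, IsProP p (G i))
    (φ : ∀ i j : I, j ≤ i → (G i →* G j))
    (hcont : ∀ (i j : I) (h : j ≤ i), Continuous (φ i j h))
    (hid : ∀ i : I, φ i i le_rfl = MonoidHom.id (G i))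
    (hcomp : ∀ (i j k : I) (hij : j ≤ i) (hjk : k ≤ j),
      (φ j k hjk).comp (φ i j hij) = φ i k (hjk.trans hij))
    (d : ℕ)
    (hd : ∀ i, dRank (G i) = (d : ℕ∞))
    (H : ∀ i, Subgroup (G i))
    (hHclosed : ∀ i, IsClosed ((H i : Set (G i))))
    (hHmap : ∀ (i j : I) (h : j ≤ i), (H i).map (φ i j h) ≤ H j) :
    closedNormalClosure
        ((⨅ i, (H i).comap (invLimProj G φ i) : Subgroup ↥(invLim G φ)) : Set ↥(invLim G φ))
      = ⨅ i, (closedNormalClosure ((H i : Set (G i)))).comap (invLimProj G φ i) :=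
  closedNormalClosure_invLim_general G φ hcont hcomp H hHclosed hHmap
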